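/- There exists a constant c > 0 such that for every n ≥ 2 and all real numbers a_{i,j} (1 ≤ i < j ≤ n), ∫₀¹ | ∑_{1≤i<j≤n} a_{i,j} r_i(t) r_j(t) | dt ≥ c · (∑_{1≤i<j≤n} a_{i,j}²)^{1/2}. That is, the L¹-norm of a Rademacher chaos sum of order 2 dominates (up to an absolute constant) the ℓ²-norm of its coefficients. -/

import Mathlib

/-!
On each dyadic interval `[m / 2^N, (m + 1) / 2^N)` with `N = n - 1` every `r_k` (`k ≤ n`) is
constant, equal to `(-1)` to the binary digit of `m` at position `n - k`. So the chaos sum becomes a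
Walsh polynomial `f` of degree at most two on `{0, …, 2^N - 1}`, and its `L¹`-norm is the average of
`|f|`. Orthogonality of Walsh functions identifies `‖f‖₂` with the `ℓ²`-norm of the coefficients,
the Bonami inequality `‖f‖₄⁴ ≤ 9^d ‖f‖₂⁴` for degree `d` (induction on the number of binary digits,
splitting off the top one) bounds `‖f‖₄`, and the interpolation `‖f‖₂⁴ ≤ ‖f‖₁² ‖f‖₂ ‖f‖₄⁴` then
gives `‖f‖₂ ≤ 9 ‖f‖₁`.
-/

open MeasureTheory ENNReal

/-- The Rademacher functions on `[0,1]`: `r k t = (-1)^⌊2^(k-1) t⌋` (for `k ≥ 1`). -/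
noncomputable def rademacher (k : ℕ) (t : ℝ) : ℝ :=
  (-1 : ℝ) ^ ⌊(2 : ℝ) ^ (k - 1) * t⌋

open Finset

namespace RademacherChaos

noncomputable def bitSign (k m : ℕ) : ℝ := (-1) ^ (m / 2 ^ k)

noncomputable def walsh (S : Finset ℕ) (m : ℕ) : ℝ := ∏ k ∈ S, bitSign k m

noncomputable def walshPoly {ι : Type*} (s : Finset ι) (σ : ι → Finset ℕ) (c : ι → ℝ) (m : ℕ) :
    ℝ :=
  ∑ i ∈ s, c i * walsh (σ i) m

lemma bitSign_of_lt {k m : ℕ} (hm : m < 2 ^ k) : bitSign k m = 1 := by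
  rw [bitSign, Nat.div_eq_of_lt hm, pow_zero]

lemma bitSign_two_pow_add_self {k m : ℕ} (hm : m < 2 ^ k) : bitSign k (2 ^ k + m) = -1 := by
  rw [bitSign, add_comm, Nat.add_div_right _ (by positivity), Nat.div_eq_of_lt hm, pow_one]

lemma bitSign_two_pow_add_of_lt {k N : ℕ} (hk : k < N) (m : ℕ) :
    bitSign k (2 ^ N + m) = bitSign k m := by
  obtain ⟨j, rfl⟩ := Nat.exists_eq_add_of_lt hk
  rw [bitSign, bitSign, show k + j + 1 = k + (j + 1) by ring, pow_add,
    Nat.mul_add_div (by positivity), pow_add, pow_succ, mul_comm _ 2, pow_mul]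
  norm_num

lemma walsh_two_pow_add_of_subset {S : Finset ℕ} {N : ℕ} (hS : S ⊆ range N) (m : ℕ) :
    walsh S (2 ^ N + m) = walsh S m :=
  prod_congr rfl fun _ hk => bitSign_two_pow_add_of_lt (mem_range.mp (hS hk)) m

lemma walsh_erase_of_lt {S : Finset ℕ} {N m : ℕ} (hm : m < 2 ^ N) :
    walsh (S.erase N) m = walsh S m := by
  by_cases hN : N ∈ S
  · rw [walsh, walsh, ← mul_prod_erase S _ hN, bitSign_of_lt hm, one_mul]
  · rw [erase_eq_of_notMem hN]

lemma erase_subset_range {S : Finset ℕ} {N : ℕ} (hS : S ⊆ range (N + 1)) :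
    S.erase N ⊆ range N := by
  intro k hk
  have := mem_range.mp (hS (mem_of_mem_erase hk))
  exact mem_range.mpr (by have := ne_of_mem_erase hk; omega)

lemma walsh_two_pow_add {S : Finset ℕ} {N m : ℕ} (hS : S ⊆ range (N + 1)) (hm : m < 2 ^ N) :
    walsh S (2 ^ N + m) = (if N ∈ S then -1 else 1) * walsh (S.erase N) m := by
  rw [← walsh_two_pow_add_of_subset (erase_subset_range hS) m]
  split_ifs with hN
  · rw [walsh, walsh, ← mul_prod_erase S _ hN, bitSign_two_pow_add_self hm]
  · rw [erase_eq_of_notMem hN, one_mul]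

lemma sum_range_two_pow_succ {M : Type*} [AddCommMonoid M] (N : ℕ) (φ : ℕ → M) :
    ∑ m ∈ range (2 ^ (N + 1)), φ m = ∑ m ∈ range (2 ^ N), (φ m + φ (2 ^ N + m)) := by
  rw [pow_succ, mul_two, sum_range_add, sum_add_distrib]

lemma sum_walsh_mul_walsh {N : ℕ} {S T : Finset ℕ} (hS : S ⊆ range N) (hT : T ⊆ range N) :
    ∑ m ∈ range (2 ^ N), walsh S m * walsh T m = if S = T then 2 ^ N else 0 := by
  induction N generalizing S T with
  | zero =>
    rw [range_zero, subset_empty] at hS hT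
    simp [hS, hT, walsh]
  | succ N ih =>
    have hsplit : ∀ m ∈ range (2 ^ N),
        walsh S m * walsh T m + walsh S (2 ^ N + m) * walsh T (2 ^ N + m) =
          (1 + (if N ∈ S then -1 else 1) * (if N ∈ T then -1 else 1)) *
            (walsh (S.erase N) m * walsh (T.erase N) m) := by
      intro m hm
      rw [walsh_two_pow_add hS (mem_range.mp hm), walsh_two_pow_add hT (mem_range.mp hm),
        walsh_erase_of_lt (mem_range.mp hm), walsh_erase_of_lt (mem_range.mp hm)]
      ring
    rw [sum_range_two_pow_succ, sum_congr rfl hsplit, ← mul_sum,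
      ih (erase_subset_range hS) (erase_subset_range hT)]
    by_cases hNS : N ∈ S <;> by_cases hNT : N ∈ T
    · have : S.erase N = T.erase N ↔ S = T :=
        ⟨fun h => by rw [← insert_erase hNS, h, insert_erase hNT], fun h => h ▸ rfl⟩
      simp only [hNS, hNT, this]; split_ifs <;> ring
    · have : S ≠ T := fun h => hNT (h ▸ hNS)
      simp [hNS, hNT, this]
    · have : S ≠ T := fun h => hNS (h ▸ hNT)
      simp [hNS, hNT, this]
    · simp only [hNS, hNT, erase_eq_of_notMem, not_false_eq_true]; split_ifs <;> ring

lemma sum_walshPoly_sq {ι : Type*} {N : ℕ} {s : Finset ι} {σ : ι → Finset ℕ}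
    (hσ : ∀ i ∈ s, σ i ⊆ range N) (hinj : Set.InjOn σ s) (c : ι → ℝ) :
    ∑ m ∈ range (2 ^ N), walshPoly s σ c m ^ 2 = 2 ^ N * ∑ i ∈ s, c i ^ 2 := by
  classical
  calc ∑ m ∈ range (2 ^ N), walshPoly s σ c m ^ 2
      = ∑ i ∈ s, ∑ j ∈ s, c i * c j * ∑ m ∈ range (2 ^ N), walsh (σ i) m * walsh (σ j) m := by
        simp_rw [walshPoly, sq, sum_mul_sum, mul_sum]
        rw [sum_comm]; refine sum_congr rfl fun i _ => ?_
        rw [sum_comm]; exact sum_congr rfl fun j _ => sum_congr rfl fun m _ => by ring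
    _ = ∑ i ∈ s, ∑ j ∈ s, if i = j then 2 ^ N * c i ^ 2 else 0 := by
        refine sum_congr rfl fun i hi => sum_congr rfl fun j hj => ?_
        rw [sum_walsh_mul_walsh (hσ i hi) (hσ j hj)]
        by_cases h : i = j
        · subst h; simp only [if_true]; ring
        · rw [if_neg h, if_neg fun e => h (hinj hi hj e), mul_zero]
    _ = 2 ^ N * ∑ i ∈ s, c i ^ 2 := by simp [sum_ite_eq, mul_sum]

section Bonami

variable {ι : Type*} {s : Finset ι} {σ : ι → Finset ℕ} {N m : ℕ}

lemma walshPoly_of_lt (c : ι → ℝ) (hm : m < 2 ^ N) :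
    walshPoly s σ c m = walshPoly (s.filter (N ∉ σ ·)) (fun i => (σ i).erase N) c m
      + walshPoly (s.filter (N ∈ σ ·)) (fun i => (σ i).erase N) c m := by
  rw [walshPoly, walshPoly, walshPoly, add_comm, sum_filter_add_sum_filter_not]
  exact sum_congr rfl fun i _ => by rw [walsh_erase_of_lt hm]

lemma walshPoly_two_pow_add (hσ : ∀ i ∈ s, σ i ⊆ range (N + 1)) (c : ι → ℝ) (hm : m < 2 ^ N) :
    walshPoly s σ c (2 ^ N + m) = walshPoly (s.filter (N ∉ σ ·)) (fun i => (σ i).erase N) c m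
      - walshPoly (s.filter (N ∈ σ ·)) (fun i => (σ i).erase N) c m := by
  rw [walshPoly, ← sum_filter_add_sum_filter_not s (N ∉ σ ·), walshPoly, walshPoly, sub_eq_add_neg,
    ← sum_neg_distrib]
  simp only [not_not]
  congr 1 <;> refine sum_congr rfl fun i hi => ?_ <;> rw [mem_filter] at hi <;>
    simp [walsh_two_pow_add (hσ i hi.1) hm, hi.2]

lemma sum_walshPoly_pow_two_pow_succ (hσ : ∀ i ∈ s, σ i ⊆ range (N + 1)) (c : ι → ℝ) (p : ℕ) :
    ∑ m ∈ range (2 ^ (N + 1)), walshPoly s σ c m ^ p =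
      ∑ m ∈ range (2 ^ N),
        ((walshPoly (s.filter (N ∉ σ ·)) (fun i => (σ i).erase N) c m
            + walshPoly (s.filter (N ∈ σ ·)) (fun i => (σ i).erase N) c m) ^ p
          + (walshPoly (s.filter (N ∉ σ ·)) (fun i => (σ i).erase N) c m
            - walshPoly (s.filter (N ∈ σ ·)) (fun i => (σ i).erase N) c m) ^ p) := by
  rw [sum_range_two_pow_succ]
  refine sum_congr rfl fun m hm => ?_
  rw [walshPoly_of_lt c (mem_range.mp hm), walshPoly_two_pow_add hσ c (mem_range.mp hm)]

lemma bonami_step (s : Finset ι) (g h : ι → ℝ) {M r : ℝ} (hM : 0 ≤ M) (hr : 0 ≤ r)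
    (hg : M * ∑ i ∈ s, g i ^ 4 ≤ 9 * r * (∑ i ∈ s, g i ^ 2) ^ 2)
    (hh : M * ∑ i ∈ s, h i ^ 4 ≤ r * (∑ i ∈ s, h i ^ 2) ^ 2) :
    2 * M * ∑ i ∈ s, ((g i + h i) ^ 4 + (g i - h i) ^ 4) ≤
      9 * r * (∑ i ∈ s, ((g i + h i) ^ 2 + (g i - h i) ^ 2)) ^ 2 := by
  set A := ∑ i ∈ s, g i ^ 2
  set B := ∑ i ∈ s, h i ^ 2
  set X := ∑ i ∈ s, g i ^ 2 * h i ^ 2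
  have h4 : ∑ i ∈ s, ((g i + h i) ^ 4 + (g i - h i) ^ 4)
      = 2 * ∑ i ∈ s, g i ^ 4 + 12 * X + 2 * ∑ i ∈ s, h i ^ 4 := by
    simp only [X, mul_sum, ← sum_add_distrib]
    exact sum_congr rfl fun i _ => by ring
  have h2 : ∑ i ∈ s, ((g i + h i) ^ 2 + (g i - h i) ^ 2) = 2 * A + 2 * B := by
    simp only [A, B, mul_sum, ← sum_add_distrib]
    exact sum_congr rfl fun i _ => by ring
  have hCS : X ^ 2 ≤ (∑ i ∈ s, g i ^ 4) * ∑ i ∈ s, h i ^ 4 := by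
    have := sum_mul_sq_le_sq_mul_sq s (fun i => g i ^ 2) (fun i => h i ^ 2)
    simpa only [← pow_mul, Nat.reduceMul] using this
  have hX : M * X ≤ 3 * r * (A * B) := by
    refine le_of_sq_le_sq ?_ (by positivity)
    calc (M * X) ^ 2 ≤ (M * ∑ i ∈ s, g i ^ 4) * (M * ∑ i ∈ s, h i ^ 4) := by
          rw [mul_pow]; nlinarith [mul_le_mul_of_nonneg_left hCS (sq_nonneg M)]
      _ ≤ (9 * r * A ^ 2) * (r * B ^ 2) :=
          mul_le_mul hg hh (by positivity) (by positivity)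
      _ = (3 * r * (A * B)) ^ 2 := by ring
  rw [h4, h2]
  nlinarith [mul_nonneg hr (sq_nonneg B)]

/-- `σ` need not be injective: this lets the induction erase the top digit without regrouping
terms. -/
theorem walshPoly_bonami (d : ℕ) (hσ : ∀ i ∈ s, σ i ⊆ range N ∧ (σ i).card ≤ d) (c : ι → ℝ) :
    2 ^ N * ∑ m ∈ range (2 ^ N), walshPoly s σ c m ^ 4 ≤
      9 ^ d * (∑ m ∈ range (2 ^ N), walshPoly s σ c m ^ 2) ^ 2 := by
  induction N generalizing d s σ with
  | zero =>
    simp only [pow_zero, one_mul, range_one, sum_singleton]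
    nlinarith [one_le_pow₀ (show (1 : ℝ) ≤ 9 by norm_num) (n := d),
      pow_nonneg (sq_nonneg (walshPoly s σ c 0)) 2]
  | succ N ih =>
    have hsum := sum_walshPoly_pow_two_pow_succ (fun i hi => (hσ i hi).1) c
    set τ : ι → Finset ℕ := fun i => (σ i).erase N
    set g := walshPoly (s.filter (N ∉ σ ·)) τ c
    set h := walshPoly (s.filter (N ∈ σ ·)) τ c
    have hτ : ∀ i ∈ s, τ i ⊆ range N := fun i hi => erase_subset_range (hσ i hi).1
    have hg : ∀ i ∈ s.filter (N ∉ σ ·), τ i ⊆ range N ∧ (τ i).card ≤ d := fun i hi =>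
      ⟨hτ i (mem_filter.mp hi).1, (card_erase_le).trans (hσ i (mem_filter.mp hi).1).2⟩
    have hh : ∀ i ∈ s.filter (N ∈ σ ·), τ i ⊆ range N ∧ (τ i).card ≤ d - 1 := fun i hi =>
      ⟨hτ i (mem_filter.mp hi).1, by
        rw [card_erase_of_mem (mem_filter.mp hi).2]
        exact Nat.sub_le_sub_right (hσ i (mem_filter.mp hi).1).2 1⟩
    rw [hsum, hsum, pow_succ, mul_comm _ 2]
    rcases d with _ | d
    · have h0 : h = 0 := by
        funext m
        rw [Pi.zero_apply, show h m = walshPoly _ τ c m from rfl, walshPoly, filter_false_of_mem,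
          sum_empty]
        exact fun i hi hN => notMem_empty N (card_eq_zero.mp (Nat.le_zero.mp (hσ i hi).2) ▸ hN)
      have hg0 := ih 0 hg
      simp only [h0, Pi.zero_apply, add_zero, sub_zero, pow_zero, one_mul, ← two_mul, ← mul_sum]
        at hg0 ⊢
      nlinarith
    · have := bonami_step (range (2 ^ N)) g h (M := 2 ^ N) (r := 9 ^ d) (by positivity)
        (by positivity) (by rw [← pow_succ']; exact ih (d + 1) hg) (ih d hh)
      rwa [pow_succ' (9 : ℝ) d]

end Bonami

lemma mul_sum_sq_le_of_mul_sum_pow_four_le {ι : Type*} (s : Finset ι) (f : ι → ℝ) {M K : ℝ}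
    (hM : 0 ≤ M) (hK : 0 ≤ K) (h : M * ∑ i ∈ s, f i ^ 4 ≤ K * (∑ i ∈ s, f i ^ 2) ^ 2) :
    M * ∑ i ∈ s, f i ^ 2 ≤ K * (∑ i ∈ s, |f i|) ^ 2 := by
  set L := ∑ i ∈ s, |f i|
  set S2 := ∑ i ∈ s, f i ^ 2
  set S3 := ∑ i ∈ s, |f i| ^ 3
  set S4 := ∑ i ∈ s, f i ^ 4
  have hsq : ∀ i, f i ^ 2 = |f i| ^ 2 := fun i => (sq_abs (f i)).symm
  have h12 : S2 ^ 2 ≤ L * S3 := sum_sq_le_sum_mul_sum_of_sq_le_mul s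
    (fun i _ => abs_nonneg (f i)) (fun i _ => by positivity)
    (fun i _ => le_of_eq (by rw [hsq]; ring))
  have h34 : S3 ^ 2 ≤ S2 * S4 := sum_sq_le_sum_mul_sum_of_sq_le_mul s
    (fun i _ => sq_nonneg (f i)) (fun i _ => by positivity)
    (fun i _ => le_of_eq (by rw [show f i ^ 4 = (f i ^ 2) ^ 2 by ring, hsq]; ring))
  have hS2 : 0 ≤ S2 := sum_nonneg fun i _ => sq_nonneg (f i)
  rcases hS2.eq_or_lt with hS2 | hS2
  · rw [← hS2, mul_zero]; positivity
  refine le_of_mul_le_mul_right ?_ (pow_pos hS2 3)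
  calc M * S2 * S2 ^ 3 = M * (S2 ^ 2) ^ 2 := by ring
    _ ≤ M * (L ^ 2 * (S2 * S4)) := by
        gcongr
        calc (S2 ^ 2) ^ 2 ≤ (L * S3) ^ 2 := by gcongr
          _ = L ^ 2 * S3 ^ 2 := by ring
          _ ≤ L ^ 2 * (S2 * S4) := by gcongr
    _ = L ^ 2 * S2 * (M * S4) := by ring
    _ ≤ L ^ 2 * S2 * (K * S2 ^ 2) := by gcongr
    _ = K * L ^ 2 * S2 ^ 3 := by ring

lemma rademacher_eq_bitSign {N k : ℕ} (hk : k - 1 ≤ N) {t : ℝ} (ht : 0 ≤ t) :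
    rademacher k t = bitSign (N - (k - 1)) ⌊2 ^ N * t⌋₊ := by
  have hscale : (2 : ℝ) ^ (k - 1) * t = 2 ^ N * t / ((2 ^ (N - (k - 1)) : ℕ) : ℝ) := by
    rw [_root_.eq_div_iff (by positivity), Nat.cast_pow, Nat.cast_ofNat, mul_right_comm, ← pow_add,
      Nat.add_sub_cancel' hk]
  rw [rademacher, hscale, Int.floor_div_natCast, ← Int.natCast_floor_eq_floor (by positivity),
    ← Int.natCast_div, zpow_natCast, bitSign]

lemma integral_natFloor (G : ℕ → ℝ) (K : ℕ) : ∫ u in (0 : ℝ)..K, G ⌊u⌋₊ = ∑ m ∈ range K, G m := by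
  have hstep : ∀ m : ℕ, Set.EqOn (fun u : ℝ => G ⌊u⌋₊) (fun _ => G m) (Set.Ico m (m + 1)) :=
    fun m u hu => by simp only [Nat.floor_eq_on_Ico m u hu]
  have hle : ∀ m : ℕ, (m : ℝ) ≤ (m + 1 : ℕ) := fun m => by push_cast; linarith
  have hint : ∀ m < K, IntervalIntegrable (fun u : ℝ => G ⌊u⌋₊) volume m (m + 1 : ℕ) :=
    fun m _ => by
      rw [intervalIntegrable_iff_integrableOn_Ico_of_le (hle m), Nat.cast_succ]
      exact (integrableOn_const measure_Ico_lt_top.ne).congr_fun (hstep m).symm measurableSet_Ico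
  rw [← Nat.cast_zero, ← intervalIntegral.sum_integral_adjacent_intervals hint]
  refine sum_congr rfl fun m _ => ?_
  rw [intervalIntegral.integral_of_le (hle m), ← integral_Ico_eq_integral_Ioc, Nat.cast_succ,
    setIntegral_congr_fun measurableSet_Ico (hstep m), setIntegral_const]
  simp

lemma integral_Icc_eq_sum_div {K : ℕ} (hK : 0 < K) {F : ℝ → ℝ} (G : ℕ → ℝ)
    (hF : ∀ t ∈ Set.Ico (0 : ℝ) 1, F t = G ⌊K * t⌋₊) :
    ∫ t in Set.Icc (0 : ℝ) 1, F t = (∑ m ∈ range K, G m) / K := by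
  calc ∫ t in Set.Icc (0 : ℝ) 1, F t = ∫ t in Set.Ico (0 : ℝ) 1, G ⌊K * t⌋₊ := by
        rw [integral_Icc_eq_integral_Ico, setIntegral_congr_fun measurableSet_Ico hF]
    _ = ∫ t in (0 : ℝ)..1, G ⌊K * t⌋₊ := by
        rw [intervalIntegral.integral_of_le zero_le_one, integral_Ico_eq_integral_Ioc]
    _ = (∑ m ∈ range K, G m) / K := by
        rw [intervalIntegral.integral_comp_mul_left (fun u => G ⌊u⌋₊) (by positivity), mul_zero,
          mul_one, integral_natFloor, smul_eq_mul, inv_mul_eq_div]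

section Chaos

variable {n : ℕ}

def chaosIndex (n : ℕ) : Finset (Σ _ : ℕ, ℕ) := (Icc 1 n).sigma fun i => Ioc i n

/-- The binary digits whose signs give `r_i r_j` on the dyadic intervals of length `2 ^ (1 - n)`.
Since `r_1 = 1` on `[0, 1)`, the digit `n - 1` (which is `0` for `m < 2 ^ (n - 1)`) is dropped. -/
def chaosSupport (n : ℕ) (p : Σ _ : ℕ, ℕ) : Finset ℕ :=
  ({n - p.1, n - p.2} : Finset ℕ).erase (n - 1)

lemma mem_chaosIndex {p : Σ _ : ℕ, ℕ} : p ∈ chaosIndex n ↔ 1 ≤ p.1 ∧ p.1 < p.2 ∧ p.2 ≤ n := by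
  simp only [chaosIndex, mem_sigma, mem_Icc, mem_Ioc]
  omega

lemma sum_chaosIndex (g : ℕ → ℕ → ℝ) :
    ∑ i ∈ Icc 1 n, ∑ j ∈ Ioc i n, g i j = ∑ p ∈ chaosIndex n, g p.1 p.2 :=
  sum_sigma' _ _ g

lemma chaosSupport_subset_range {p : Σ _ : ℕ, ℕ} (hp : p ∈ chaosIndex n) :
    chaosSupport n p ⊆ range (n - 1) := by
  intro k hk
  have := mem_chaosIndex.mp hp
  simp only [chaosSupport, mem_erase, mem_insert, mem_singleton] at hk
  rw [mem_range]
  omega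

lemma card_chaosSupport_le (p : Σ _ : ℕ, ℕ) : (chaosSupport n p).card ≤ 2 :=
  card_erase_le.trans card_le_two

lemma chaosSupport_injOn : Set.InjOn (chaosSupport n) (chaosIndex n) := by
  rintro ⟨i, j⟩ hp ⟨k, l⟩ hq he
  have hij := mem_chaosIndex.mp hp
  have hkl := mem_chaosIndex.mp hq
  have e x : (x ∈ chaosSupport n ⟨i, j⟩) = (x ∈ chaosSupport n ⟨k, l⟩) := congrArg (x ∈ ·) he
  have e1 := e (n - j); have e2 := e (n - l); have e3 := e (n - i); have e4 := e (n - k)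
  simp only [chaosSupport, mem_erase, mem_insert, mem_singleton, eq_iff_iff, or_true, true_or,
    and_true] at e1 e2 e3 e4 hij hkl
  obtain rfl : i = k := by omega
  obtain rfl : j = l := by omega
  rfl

lemma rademacher_mul_rademacher {p : Σ _ : ℕ, ℕ} (hp : p ∈ chaosIndex n) {t : ℝ}
    (ht : t ∈ Set.Ico (0 : ℝ) 1) :
    rademacher p.1 t * rademacher p.2 t = walsh (chaosSupport n p) ⌊2 ^ (n - 1) * t⌋₊ := by
  obtain ⟨h1, h12, h2⟩ := mem_chaosIndex.mp hp
  have hm : ⌊(2 : ℝ) ^ (n - 1) * t⌋₊ < 2 ^ (n - 1) := by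
    rw [Nat.floor_lt (mul_nonneg (by positivity) ht.1)]
    exact_mod_cast mul_lt_of_lt_one_right (by positivity) ht.2
  rw [rademacher_eq_bitSign (N := n - 1) (by omega) ht.1,
    rademacher_eq_bitSign (N := n - 1) (by omega) ht.1, chaosSupport, walsh_erase_of_lt hm, walsh,
    prod_pair (by omega), show n - 1 - (p.1 - 1) = n - p.1 by omega,
    show n - 1 - (p.2 - 1) = n - p.2 by omega]

lemma chaos_sum_eq_walshPoly (a : ℕ → ℕ → ℝ) {t : ℝ} (ht : t ∈ Set.Ico (0 : ℝ) 1) :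
    ∑ i ∈ Icc 1 n, ∑ j ∈ Ioc i n, a i j * (rademacher i t * rademacher j t) =
      walshPoly (chaosIndex n) (chaosSupport n) (fun p => a p.1 p.2) ⌊2 ^ (n - 1) * t⌋₊ := by
  rw [sum_chaosIndex, walshPoly]
  exact sum_congr rfl fun p hp => by rw [rademacher_mul_rademacher hp ht]

end Chaos

end RademacherChaos

open RademacherChaos

/-- The `L¹`-norm of a Rademacher chaos sum of order 2 dominates, up to an
absolute constant, the `ℓ²`-norm of its coefficients. -/
theorem chaos_L1_lower_bound :
    ∃ c : ℝ, 0 < c ∧ ∀ n : ℕ, 2 ≤ n → ∀ a : ℕ → ℕ → ℝ,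
      c * Real.sqrt (∑ i ∈ Finset.Icc 1 n, ∑ j ∈ Finset.Ioc i n, a i j ^ 2) ≤
        ∫ t in Set.Icc (0 : ℝ) 1,
          |∑ i ∈ Finset.Icc 1 n, ∑ j ∈ Finset.Ioc i n,
            a i j * (rademacher i t * rademacher j t)| := by
  refine ⟨1 / 9, by norm_num, fun n _ a => ?_⟩
  set f := walshPoly (chaosIndex n) (chaosSupport n) fun p => a p.1 p.2
  have hmom := mul_sum_sq_le_of_mul_sum_pow_four_le _ f (by positivity) (by norm_num)
    (walshPoly_bonami 2 (fun p hp => ⟨chaosSupport_subset_range hp, card_chaosSupport_le p⟩) _)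
  rw [sum_walshPoly_sq (fun p hp => chaosSupport_subset_range hp) chaosSupport_injOn] at hmom
  rw [integral_Icc_eq_sum_div (K := 2 ^ (n - 1)) (by positivity) (fun m => |f m|)
    fun t ht => by push_cast; rw [chaos_sum_eq_walshPoly a ht], sum_chaosIndex]
  push_cast
  set Q := ∑ p ∈ chaosIndex n, a p.1 p.2 ^ 2
  set L := ∑ m ∈ range (2 ^ (n - 1)), |f m|
  have hL : 0 ≤ L := sum_nonneg fun m _ => abs_nonneg (f m)
  have key : √Q ≤ 9 * L / 2 ^ (n - 1) := Real.sqrt_le_iff.mpr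
    ⟨by positivity, by rw [div_pow, le_div_iff₀ (by positivity)]; linarith⟩
  calc 1 / 9 * √Q ≤ 1 / 9 * (9 * L / 2 ^ (n - 1)) := by gcongr
    _ = L / 2 ^ (n - 1) := by ring
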